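/- arXiv:2504.19428 — 2 statements merged into one kernel-verified Lean document; each statement's English description precedes it below -/
import Mathlib

section
/- For every real α, all 0 < s < t, every x > 0 and every integer k ≥ 1, setting Λ := x/β(s;α) − x/β(t;α), one has ∫₀^∞ (μ(t−s;α)/β(t−s;α)) e^{−z/β(t−s;α)} f_k(z, x; s; α) dz = (μ(t;α)/β(t;α)) e^{−x/β(t;α)} · (Λ^{k−1}/(k−1)!) e^{−Λ}. (This is the leading-order integral identity at the heart of Lemma 3, giving the shifted-Poisson distribution of the number of ancestors at an intermediate time.) -/
open MeasureTheory Real Filter Set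

/-- `muF t α` is the function μ(t;α) = 2α e^{αt}/(e^{αt} − 1) for α ≠ 0, and 2/t for α = 0. -/
noncomputable def muF (t α : ℝ) : ℝ :=
  if α = 0 then 2 / t else 2 * α * Real.exp (α * t) / (Real.exp (α * t) - 1)

/-- `betaF t α` is the function β(t;α) = (e^{αt} − 1)/(2α) for α ≠ 0, and t/2 for α = 0. -/
noncomputable def betaF (t α : ℝ) : ℝ :=
  if α = 0 then t / 2 else (Real.exp (α * t) - 1) / (2 * α)

/-- `fl l x₀ x t α` is the term f_l(x₀, x; t; α), the joint density contribution from `l`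
founding families. -/
noncomputable def fl (l : ℕ) (x₀ x t α : ℝ) : ℝ :=
  Real.exp (-(x₀ * muF t α)) * (x₀ * muF t α) ^ l / (Nat.factorial l : ℝ) *
    (x ^ (l - 1) * Real.exp (-(x / betaF t α)) / (betaF t α ^ l * (Nat.factorial (l - 1) : ℝ)))

/-- `fplus x₀ x t α` = ∑_{l=1}^∞ f_l(x₀, x; t; α), the absolutely continuous part of the
Feller-diffusion transition density. -/
noncomputable def fplus (x₀ x t α : ℝ) : ℝ := ∑' l : ℕ, fl (l + 1) x₀ x t α



lemma betaF_pos {t α : ℝ} (ht : 0 < t) : 0 < betaF t α := by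
  unfold betaF
  split_ifs with h
  · linarith
  · rcases lt_or_gt_of_ne h with hneg | hpos
    · apply div_pos_of_neg_of_neg
      · have : α * t < 0 := mul_neg_of_neg_of_pos hneg ht
        have := Real.exp_lt_one_iff.mpr this
        linarith
      · linarith
    · apply div_pos
      · have : 0 < α * t := mul_pos hpos ht
        have := Real.add_one_le_exp (α * t)
        linarith
      · linarith

lemma mu_beta {t α : ℝ} (ht : 0 < t) : muF t α * betaF t α = Real.exp (α * t) := by
  unfold muF betaF
  split_ifs with h
  · subst h; simp; exact ht.ne'
  · have hne : Real.exp (α * t) - 1 ≠ 0 := by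
      intro hc
      have : Real.exp (α * t) = 1 := by linarith
      rw [Real.exp_eq_one_iff] at this
      exact h (by rcases mul_eq_zero.mp this with h1 | h1; exact h1; linarith)
    field_simp

lemma beta_semigroup {s t α : ℝ} : betaF t α = betaF s α + Real.exp (α * s) * betaF (t - s) α := by
  unfold betaF
  split_ifs with h
  · subst h; simp; ring
  · have : Real.exp (α * s) * Real.exp (α * (t - s)) = Real.exp (α * t) := by
      rw [← Real.exp_add]; ring_nf
    field_simp
    linarith [this]

lemma integral_pow_exp (n : ℕ) {r : ℝ} (hr : 0 < r) :
    ∫ z in Ioi (0 : ℝ), z ^ n * Real.exp (-(r * z)) =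
      (Nat.factorial n : ℝ) / r ^ (n + 1) := by
  have h := Real.integral_rpow_mul_exp_neg_mul_Ioi (a := (n : ℝ) + 1) (r := r)
    (by positivity) hr
  have heq : ∫ z in Ioi (0 : ℝ), z ^ n * Real.exp (-(r * z)) =
      ∫ z in Ioi (0 : ℝ), z ^ ((n : ℝ) + 1 - 1) * Real.exp (-(r * z)) := by
    refine setIntegral_congr_fun measurableSet_Ioi (fun z hz => ?_)
    rw [add_sub_cancel_right, Real.rpow_natCast]
  have hc : ((n : ℝ) + 1) = ((n + 1 : ℕ) : ℝ) := by push_cast; ring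
  rw [heq, h, show ((1:ℝ)/r) ^ ((n:ℝ)+1) = (1/r)^(n+1) from by
    rw [hc, Real.rpow_natCast], Real.Gamma_nat_eq_factorial]
  rw [one_div, inv_pow]
  ring

theorem stmt1 (α s t x : ℝ) (hs : 0 < s) (hst : s < t) (hx : 0 < x) (k : ℕ) (hk : 1 ≤ k) :
    ∫ z in Set.Ioi (0 : ℝ),
        (muF (t - s) α / betaF (t - s) α) * Real.exp (-(z / betaF (t - s) α)) * fl k z x s α
      = (muF t α / betaF t α) * Real.exp (-(x / betaF t α)) *
          ((x / betaF s α - x / betaF t α) ^ (k - 1) / (Nat.factorial (k - 1) : ℝ)) *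
          Real.exp (-(x / betaF s α - x / betaF t α)) := by
  obtain ⟨j, rfl⟩ : ∃ j, k = j + 1 := ⟨k - 1, (Nat.succ_pred_eq_of_pos hk).symm⟩
  have hts : 0 < t - s := by linarith
  have ht : 0 < t := by linarith
  set b := betaF s α with hbdef
  set b' := betaF (t - s) α with hb'def
  set B := betaF t α with hBdef
  set m := muF s α with hmdef
  set m' := muF (t - s) α with hm'def
  set M := muF t α with hMdef
  have hb : 0 < b := betaF_pos hs
  have hb' : 0 < b' := betaF_pos hts
  have hB : 0 < B := betaF_pos ht
  have hmb : m * b = Real.exp (α * s) := mu_beta hs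
  have hm'b' : m' * b' = Real.exp (α * (t - s)) := mu_beta hts
  have hMB : M * B = Real.exp (α * t) := mu_beta ht
  have hm : 0 < m := by nlinarith [Real.exp_pos (α * s)]
  have hEF : (m * b) * (m' * b') = M * B := by
    rw [hmb, hm'b', hMB, ← Real.exp_add]; ring_nf
  have hsem : B = b + (m * b) * b' := by rw [hmb]; exact beta_semigroup
  set D := m + 1 / b' with hDdef
  have hD : 0 < D := by positivity
  have hDB : D = B / (b * b') := by
    rw [hDdef, hsem]; field_simp; ring
  have hLam : x / b - x / B = x * m * b' / B := by
    rw [div_sub_div _ _ hb.ne' hB.ne', div_eq_div_iff (by positivity) hB.ne']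
    linear_combination x * B * hsem
  set C := (m' / b') * m ^ (j + 1) / (Nat.factorial (j + 1) : ℝ) *
      (x ^ j * Real.exp (-(x / b)) / (b ^ (j + 1) * (Nat.factorial j : ℝ))) with hCdef
  have hint : ∀ z ∈ Ioi (0 : ℝ),
      (m' / b') * Real.exp (-(z / b')) * fl (j + 1) z x s α
        = C * (z ^ (j + 1) * Real.exp (-(D * z))) := by
    intro z _
    have hexp : Real.exp (-(D * z)) = Real.exp (-(z / b')) * Real.exp (-(z * m)) := by
      rw [← Real.exp_add]; congr 1; rw [hDdef]; field_simp; ring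
    rw [fl]
    simp only [Nat.add_sub_cancel, ← hbdef, ← hmdef]
    rw [hexp, hCdef, mul_pow]
    ring
  rw [setIntegral_congr_fun measurableSet_Ioi hint, MeasureTheory.integral_const_mul,
    integral_pow_exp (j + 1) hD]
  simp only [Nat.add_sub_cancel]
  have hE3 : Real.exp (-(x / B)) * Real.exp (-(x * m * b' / B)) = Real.exp (-(x / b)) := by
    rw [← Real.exp_add]; congr 1; linear_combination hLam
  rw [hLam, hCdef, ← hE3, hDB, div_pow]
  have hfj : (Nat.factorial j : ℝ) ≠ 0 := Nat.cast_ne_zero.mpr (Nat.factorial_ne_zero j)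
  have hfj1 : (Nat.factorial (j + 1) : ℝ) ≠ 0 := Nat.cast_ne_zero.mpr (Nat.factorial_ne_zero _)
  have hM : M = (m * b) * (m' * b') / B := by
    rw [eq_div_iff hB.ne']; linarith [hEF]
  rw [hM]
  field_simp
  have hBj : B ^ j * B⁻¹ ^ j = 1 := by rw [← mul_pow, mul_inv_cancel₀ hB.ne', one_pow]
  linear_combination (-(m' * m * m ^ j * x ^ j * B ^ 2 * b' ^ 2 * b' ^ j * b ^ 2 * b ^ j)) * hBj
end

section
/- For every real α, all 0 < s < t and every integer k ≥ 2, one has ∫₀^∞ ( (x/β(s;α) − x/β(t;α))^{k−2} / (k−2)! ) · (x μ(s;α)/(2 β(s;α))) · e^{−(x/β(s;α) − x/β(t;α))} · (1/β(t;α)) e^{−x/β(t;α)} dx = (1/2)(k−1) · (μ(s;α) β(s;α)/β(t;α)) · (1 − β(s;α)/β(t;α))^{k−2}. (This is the marginal density of the k-th population coalescent time without conditioning on X(t), from Theorem 2.) -/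
open MeasureTheory Real Filter Set

lemma betaF_pos_s6 {u α : ℝ} (hu : 0 < u) : 0 < betaF u α := by
  unfold betaF
  split_ifs with h
  · linarith
  · rcases lt_or_gt_of_ne h with hneg | hpos
    · apply div_pos_of_neg_of_neg
      · have : α * u < 0 := mul_neg_of_neg_of_pos hneg hu
        have := Real.exp_lt_one_iff.mpr this
        linarith
      · linarith
    · apply div_pos
      · have : 0 < α * u := mul_pos hpos hu
        have := Real.add_one_le_exp (α * u)
        linarith
      · linarith

theorem stmt6 (α s t : ℝ) (hs : 0 < s) (hst : s < t) (k : ℕ) (hk : 2 ≤ k) :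
    ∫ x in Set.Ioi (0 : ℝ),
        ((x / betaF s α - x / betaF t α) ^ (k - 2) / (Nat.factorial (k - 2) : ℝ)) *
          (x * muF s α / (2 * betaF s α)) *
          Real.exp (-(x / betaF s α - x / betaF t α)) *
          ((1 / betaF t α) * Real.exp (-(x / betaF t α)))
      = (1 / 2) * ((k : ℝ) - 1) * (muF s α * betaF s α / betaF t α) *
          (1 - betaF s α / betaF t α) ^ (k - 2) := by
  obtain ⟨m, rfl⟩ : ∃ m, k = m + 2 := ⟨k - 2, by omega⟩
  set b1 := betaF s α with hb1
  set b2 := betaF t α with hb2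
  have hb1p : 0 < b1 := betaF_pos_s6 hs
  have hb2p : 0 < b2 := betaF_pos_s6 (hs.trans hst)
  set a : ℝ := 1 / b1 - 1 / b2 with ha
  have key : ∫ x in Set.Ioi (0:ℝ), x ^ ((m + 2 : ℝ) - 1) * Real.exp (-(1/b1 * x))
      = (1 / (1/b1)) ^ (m + 2 : ℝ) * Real.Gamma (m + 2) := by
    have h := Real.integral_rpow_mul_exp_neg_mul_Ioi (a := (m:ℝ)+2) (r := 1/b1)
      (by positivity) (by positivity)
    exact h
  have hcongr : ∀ x ∈ Set.Ioi (0:ℝ),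
      ((x / b1 - x / b2) ^ (m + 2 - 2) / (Nat.factorial (m + 2 - 2) : ℝ)) *
          (x * muF s α / (2 * b1)) *
          Real.exp (-(x / b1 - x / b2)) *
          ((1 / b2) * Real.exp (-(x / b2)))
      = (a ^ m / (Nat.factorial m : ℝ) * (muF s α / (2 * b1)) * (1 / b2)) *
          (x ^ ((m + 2 : ℝ) - 1) * Real.exp (-(1/b1 * x))) := by
    intro x hx
    have hx' : (0:ℝ) < x := hx
    have h1 : x / b1 - x / b2 = a * x := by rw [ha]; ring
    have h2 : x ^ ((m + 2 : ℝ) - 1) = x ^ (m + 1) := by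
      rw [show (m + 2 : ℝ) - 1 = ((m + 1 : ℕ) : ℝ) by push_cast; ring,
        Real.rpow_natCast]
    have h3 : Real.exp (-(a * x)) * Real.exp (-(x / b2)) = Real.exp (-(1/b1 * x)) := by
      rw [← Real.exp_add]; congr 1; rw [ha]; ring
    simp only [Nat.add_sub_cancel, h1, h2]
    rw [← h3, mul_pow]
    ring
  rw [MeasureTheory.setIntegral_congr_fun measurableSet_Ioi hcongr,
    MeasureTheory.integral_const_mul, key]
  have hGamma : Real.Gamma (m + 2) = (Nat.factorial (m + 1) : ℝ) := by
    rw [show ((m:ℝ) + 2) = ((m + 1 : ℕ) : ℝ) + 1 by push_cast; ring,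
      Real.Gamma_nat_eq_factorial]
  have hpow : (1 / (1/b1)) ^ (m + 2 : ℝ) = b1 ^ (m + 2) := by
    rw [one_div_one_div, show (m + 2 : ℝ) = ((m + 2 : ℕ) : ℝ) by push_cast; ring,
      Real.rpow_natCast]
  rw [hGamma, hpow]
  have hab1 : a * b1 = 1 - b1 / b2 := by
    rw [ha]; field_simp
  have hfac : (Nat.factorial (m + 1) : ℝ) = (m + 1) * Nat.factorial m := by
    rw [Nat.factorial_succ]; push_cast; ring
  have hmne : (Nat.factorial m : ℝ) ≠ 0 := by positivity
  simp only [Nat.add_sub_cancel]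
  rw [← hab1, mul_pow, hfac]
  have : ((m:ℝ) + 2) - 1 = (m:ℝ) + 1 := by ring
  rw [show b1 ^ (m + 2) = b1 ^ m * b1 * b1 by ring]
  field_simp
  push_cast
  ring
end
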